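/- arXiv:1606.00176 — 2 statements merged into one kernel-verified Lean document; each statement's English description precedes it below -/
import Mathlib

section
/- Let $a > 0$, $\lambda > 0$ and set $t_0 = (2\lambda)^{-1} + e(e-1)^{-1}\lambda^{-1}$. Let $G(t,x,y) = \frac{e^{\lambda t}}{\sqrt{4\pi a t}} \big[ e^{-(x-y)^2/(4at)} - e^{-(x+y)^2/(4at)} \big]$. Then for all $t \ge t_0$, $x \ge \sqrt{8at}$ and $y > 0$, one has $\partial_t G(t,x,y) > 0$. -/
/-!
Write `α = (x-y)²/(4at)` and `β = (x+y)²/(4at)`. Up to the positive factor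
`e^{λt} / (t √(4πat))`, `∂ₜG` equals
`(λt - 1/2)(e^{-α} - e^{-β}) + α e^{-α} - β e^{-β}`, where `λt - 1/2 ≥ e/(e-1)`,
`0 ≤ α < β` and `β ≥ 2` by the hypotheses. If `α ≥ 1` the last two terms are already
positive since `s ↦ s e^{-s}` decreases on `[1, ∞)`. If `α < 1` the first term exceeds
`e/(e-1) · (e⁻¹ - e⁻²) = e⁻¹`, while `β e^{-β} < e⁻¹`.
-/

open Real

lemma mul_exp_neg_lt_mul_exp_neg {p q : ℝ} (hp : 1 ≤ p) (hpq : p < q) :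
    q * exp (-q) < p * exp (-p) := by
  have hq : q < p * exp (q - p) := by
    nlinarith [add_one_lt_exp (x := q - p) (by linarith), exp_pos (q - p)]
  calc q * exp (-q) < p * exp (q - p) * exp (-q) := by gcongr
    _ = p * exp (-p) := by rw [mul_assoc, ← exp_add]; ring_nf

lemma exp_neg_one_le_mul_exp_neg_one_sub_exp_neg_two {c : ℝ} (hc : exp 1 / (exp 1 - 1) ≤ c) :
    exp (-1) ≤ c * (exp (-1) - exp (-2)) := by
  have he : 0 < exp 1 - 1 := sub_pos.2 (one_lt_exp_iff.2 one_pos)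
  have hc' : exp 1 ≤ c * (exp 1 - 1) := (div_le_iff₀ he).mp hc
  have h2 : exp (-1) = exp 1 * exp (-2) := by rw [← exp_add]; norm_num
  have h1 : exp (-1) - exp (-2) = (exp 1 - 1) * exp (-2) := by rw [h2]; ring
  rw [h1, h2, ← mul_assoc]
  exact mul_le_mul_of_nonneg_right hc' (exp_pos _).le

lemma add_mul_exp_neg_sub_mul_exp_neg_pos {c α β : ℝ} (hc : exp 1 / (exp 1 - 1) ≤ c)
    (hα : 0 ≤ α) (hαβ : α < β) (hβ : 2 ≤ β) :
    0 < c * (exp (-α) - exp (-β)) + α * exp (-α) - β * exp (-β) := by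
  have hc0 : 0 < c := by
    have he : 0 < exp 1 - 1 := sub_pos.2 (one_lt_exp_iff.2 one_pos)
    exact (div_pos (exp_pos 1) he).trans_le hc
  rcases le_or_gt 1 α with hα1 | hα1
  · have hexp : exp (-β) < exp (-α) := exp_lt_exp.mpr (by linarith)
    nlinarith [mul_exp_neg_lt_mul_exp_neg hα1 hαβ]
  · have hdiff : exp (-1) - exp (-2) < exp (-α) - exp (-β) := by
      have : exp (-1) < exp (-α) := exp_lt_exp.mpr (by linarith)
      have : exp (-β) ≤ exp (-2) := exp_le_exp.mpr (by linarith)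
      linarith
    have hβ1 : β * exp (-β) < exp (-1) := by
      simpa using mul_exp_neg_lt_mul_exp_neg le_rfl (by linarith : (1 : ℝ) < β)
    nlinarith [exp_neg_one_le_mul_exp_neg_one_sub_exp_neg_two hc, mul_nonneg hα (exp_pos (-α)).le]

lemma hasDerivAt_exp_div_sqrt_mul_sub {a lam t : ℝ} (p q : ℝ) (ha : 0 < a) (ht : 0 < t) :
    HasDerivAt
      (fun s : ℝ => exp (lam * s) / sqrt (4 * π * a * s) *
        (exp (-p / (4 * a * s)) - exp (-q / (4 * a * s))))
      (exp (lam * t) / (sqrt (4 * π * a * t) * t) *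
        ((lam * t - 1 / 2) * (exp (-(p / (4 * a * t))) - exp (-(q / (4 * a * t)))) +
          p / (4 * a * t) * exp (-(p / (4 * a * t))) -
          q / (4 * a * t) * exp (-(q / (4 * a * t))))) t := by
  have h4at : 4 * a * t ≠ 0 := by positivity
  have hS : 0 < sqrt (4 * π * a * t) := sqrt_pos.mpr (by positivity)
  have hgauss (r : ℝ) : HasDerivAt (fun s : ℝ => exp (-r / (4 * a * s)))
      (exp (-r / (4 * a * t)) * ((0 * (4 * a * t) - -r * (4 * a * 1)) / (4 * a * t) ^ 2)) t :=
    ((hasDerivAt_const t (-r)).div ((hasDerivAt_id t).const_mul (4 * a)) h4at).exp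
  have hsqrt : HasDerivAt (fun s : ℝ => sqrt (4 * π * a * s))
      (1 / (2 * sqrt (4 * π * a * t)) * (4 * π * a * 1)) t :=
    (hasDerivAt_sqrt (by positivity)).comp t ((hasDerivAt_id t).const_mul (4 * π * a))
  have hexp : HasDerivAt (fun s : ℝ => exp (lam * s)) (exp (lam * t) * (lam * 1)) t :=
    ((hasDerivAt_id t).const_mul lam).exp
  refine ((hexp.div hsqrt hS.ne').mul ((hgauss p).sub (hgauss q))).congr_deriv ?_
  have hS2 : sqrt (4 * π * a * t) ^ 2 = 4 * π * a * t := sq_sqrt (by positivity)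
  simp only [Pi.sub_apply, Pi.div_apply, neg_div]
  generalize sqrt (4 * π * a * t) = S at hS hS2 ⊢
  generalize exp (-(p / (4 * a * t))) = P
  generalize exp (-(q / (4 * a * t))) = Q
  field_simp
  linear_combination (4 * a * t * (P - Q)) * hS2

theorem stmt7 (a lam : ℝ) (ha : 0 < a) (hlam : 0 < lam) (t0 : ℝ)
    (ht0 : t0 = (2 * lam)⁻¹ + Real.exp 1 * (Real.exp 1 - 1)⁻¹ * lam⁻¹)
    (t x y : ℝ) (ht : t0 ≤ t) (hx : Real.sqrt (8 * a * t) ≤ x) (hy : 0 < y) :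
    0 < deriv
      (fun s : ℝ => Real.exp (lam * s) / Real.sqrt (4 * Real.pi * a * s) *
        (Real.exp (-(x - y) ^ 2 / (4 * a * s)) - Real.exp (-(x + y) ^ 2 / (4 * a * s)))) t := by
  have he : 0 < exp 1 - 1 := sub_pos.2 (one_lt_exp_iff.2 one_pos)
  have hlt0 : lam * t0 - 1 / 2 = exp 1 / (exp 1 - 1) := by rw [ht0]; field_simp; ring
  have ht' : 0 < t := lt_of_lt_of_le (by rw [ht0]; positivity) ht
  have h4at : 0 < 4 * a * t := by positivity
  have hc : exp 1 / (exp 1 - 1) ≤ lam * t - 1 / 2 := by nlinarith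
  have hx2 : 8 * a * t ≤ x ^ 2 := by
    simpa [sq_sqrt (by positivity : 0 ≤ 8 * a * t)] using pow_le_pow_left₀ (sqrt_nonneg _) hx 2
  have hx0 : 0 < x := (sqrt_pos.mpr (by positivity)).trans_le hx
  rw [(hasDerivAt_exp_div_sqrt_mul_sub _ _ ha ht').deriv]
  refine mul_pos (by positivity) (add_mul_exp_neg_sub_mul_exp_neg_pos hc (by positivity) ?_ ?_)
  · exact div_lt_div_of_pos_right (sq_lt_sq' (by linarith) (by linarith)) h4at
  · rw [le_div_iff₀ h4at]; nlinarith
end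

section
/- Let $a > 0$, $\lambda > 0$, let $v_0 \in L^\infty(0,\infty)$ be nonnegative and not a.e. zero, and set $w(t,x) = \int_0^\infty G(t,x,y)\, v_0(y)\, dy$ where $G(t,x,y) = \frac{e^{\lambda t}}{\sqrt{4\pi a t}} \big[ e^{-(x-y)^2/(4at)} - e^{-(x+y)^2/(4at)} \big]$. Then with $t_0 = (2\lambda)^{-1} + e(e-1)^{-1}\lambda^{-1}$, for all $t \ge t_0$ and $x \ge \sqrt{8at}$, $\partial_t w(t,x) > 0$. -/
/-!
Differentiating under the integral sign (on `t/2 < s < 3t/2` the time derivative of the kernel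
is dominated by a Gaussian in `y`) gives `∂ₜw(t,x) = ∫ ∂ₜG(t,x,y) v₀(y) dy`, so it suffices that
`∂ₜG(t,x,y) > 0` for `x, y > 0`. With `u = (x-y)²/(4at) < v = (x+y)²/(4at)` and `b = λt - 1/2`,
`t ∂ₜG = e^{λt}/√(4πat) · ((b+u)e^{-u} - (b+v)e^{-v})`, and `z ↦ (b+z)e^{-z}` is strictly
decreasing on `[1-b, ∞) ⊇ [0, ∞)` once `b ≥ 1`, i.e. `λt ≥ 3/2`. This holds for `t ≥ t₀`
because `λt₀ = 1/2 + e/(e-1) > 3/2`.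
-/

open MeasureTheory Real Set Topology

lemma hasDerivAt_exp_mul_div_sqrt_mul (lam b t : ℝ) (hbt : 0 < b * t) :
    HasDerivAt (fun s => exp (lam * s) / √(b * s))
      (exp (lam * t) / √(b * t) * (lam - 1 / (2 * t))) t := by
  have hsqrt : HasDerivAt (fun s => √(b * s)) (b / (2 * √(b * t))) t := by
    simpa [div_eq_mul_inv, mul_comm] using
      ((hasDerivAt_id t).const_mul b).sqrt hbt.ne'
  have ht : t ≠ 0 := by rintro rfl; simp at hbt
  have hpos := sqrt_pos.mpr hbt
  refine (((hasDerivAt_id t).const_mul lam).exp.div hsqrt hpos.ne').congr_deriv ?_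
  field_simp
  rw [sq_sqrt hbt.le]
  simp only [id_eq]
  ring

lemma hasDerivAt_exp_neg_div_mul (k b t : ℝ) (ht : t ≠ 0) :
    HasDerivAt (fun s => exp (-k / (b * s))) (exp (-k / (b * t)) * (k / (b * t ^ 2))) t := by
  have h : HasDerivAt (fun s => -k / b * s⁻¹) (-k / b * -(t ^ 2)⁻¹) t :=
    (hasDerivAt_inv ht).const_mul _
  convert h.exp using 1
  · funext s; congr 1; field_simp
  · congr 1
    · congr 1; field_simp
    · field_simp

lemma add_mul_exp_neg_strictAntiOn (b : ℝ) :
    StrictAntiOn (fun z => (b + z) * exp (-z)) (Ici (1 - b)) := by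
  apply strictAntiOn_of_deriv_neg (convex_Ici _) (by fun_prop)
  intro z hz
  rw [interior_Ici, mem_Ioi] at hz
  have hd : HasDerivAt (fun z => (b + z) * exp (-z)) ((1 - b - z) * exp (-z)) z :=
    (((hasDerivAt_id z).const_add b).mul (hasDerivAt_neg z).exp).congr_deriv
      (by simp only [one_mul, id_eq, mul_neg, mul_one]; ring)
  rw [hd.deriv]
  exact mul_neg_of_neg_of_pos (by linarith) (exp_pos _)

lemma exp_neg_div_le_exp_neg_div {k r r' : ℝ} (hk : 0 ≤ k) (hr : 0 < r) (hrr' : r ≤ r') :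
    exp (-k / r) ≤ exp (-k / r') := by
  rw [exp_le_exp, neg_div, neg_div, neg_le_neg_iff]
  exact div_le_div_of_nonneg_left hk hr hrr'

lemma mul_exp_neg_le (z : ℝ) : z * exp (-z) ≤ 2 * exp (-z / 2) := by
  have h : z ≤ 2 * exp (z / 2) := by linarith [add_one_le_exp (z / 2), exp_pos (z / 2)]
  calc z * exp (-z) ≤ 2 * exp (z / 2) * exp (-z) := by gcongr
    _ = 2 * exp (-z / 2) := by rw [mul_assoc, ← exp_add]; ring_nf

section GaussianFactor

variable {k b s t : ℝ} (hk : 0 ≤ k) (hb : 0 < b) (hs : s ∈ Ioo (t / 2) (3 * t / 2))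
include hk hb hs

lemma exp_neg_div_mul_le_of_mem_Ioo : exp (-k / (b * s)) ≤ exp (-k / (3 * b * t)) := by
  have ht : 0 < t := by linarith [hs.1, hs.2]
  exact exp_neg_div_le_exp_neg_div hk (mul_pos hb (by linarith [hs.1])) (by nlinarith [hs.2])

lemma div_mul_sq_mul_exp_neg_div_mul_le_of_mem_Ioo :
    k / (b * s ^ 2) * exp (-k / (b * s)) ≤ 4 / t * exp (-k / (3 * b * t)) := by
  have ht : 0 < t := by linarith [hs.1, hs.2]
  have hs0 : 0 < s := by linarith [hs.1]
  calc k / (b * s ^ 2) * exp (-k / (b * s)) = (k / (b * s) * exp (-(k / (b * s)))) / s := by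
        rw [neg_div]; field_simp
    _ ≤ 2 * exp (-(k / (b * s)) / 2) / s := div_le_div_of_nonneg_right (mul_exp_neg_le _) hs0.le
    _ = 2 / s * exp (-k / (2 * b * s)) := by rw [neg_div, neg_div, div_div]; ring_nf
    _ ≤ 4 / t * exp (-k / (3 * b * t)) := by
        refine mul_le_mul ?_ ?_ (exp_pos _).le (by positivity)
        · rw [div_le_div_iff₀ hs0 ht]; linarith [hs.1]
        · exact exp_neg_div_le_exp_neg_div hk (by positivity) (by nlinarith [hs.2])

end GaussianFactor

lemma integrable_exp_neg_sub_sq_div (x : ℝ) {b : ℝ} (hb : 0 < b) :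
    Integrable (fun y => exp (-(x - y) ^ 2 / b)) := by
  have h := (integrable_exp_neg_mul_sq (inv_pos.mpr hb)).comp_sub_right x
  refine h.congr (Filter.Eventually.of_forall fun y => ?_)
  simp only
  ring_nf

lemma integrable_exp_neg_add_sq_div (x : ℝ) {b : ℝ} (hb : 0 < b) :
    Integrable (fun y => exp (-(x + y) ^ 2 / b)) := by
  refine (integrable_exp_neg_sub_sq_div (-x) hb).congr (.of_forall fun y => ?_)
  ring_nf

lemma integral_mul_pos {α : Type*} [MeasurableSpace α] {μ : Measure α} {f g : α → ℝ}
    (hf : ∀ᵐ y ∂μ, 0 < f y) (hg : 0 ≤ᵐ[μ] g) (hg0 : ¬ g =ᵐ[μ] 0)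
    (hfg : Integrable (fun y => f y * g y) μ) : 0 < ∫ y, f y * g y ∂μ := by
  have hfg0 : 0 ≤ᵐ[μ] fun y => f y * g y := by
    filter_upwards [hf, hg] with y hfy hgy using mul_nonneg hfy.le hgy
  rw [integral_pos_iff_support_of_nonneg_ae hfg0 hfg]
  refine (pos_iff_ne_zero.mpr (mt μ.measure_support_eq_zero_iff.mp hg0)).trans_le
    (measure_mono_ae ?_)
  filter_upwards [hf] with y hfy hgy using mul_ne_zero hfy.ne' hgy

noncomputable def halfLineKernel (a lam t x y : ℝ) : ℝ :=
  exp (lam * t) / √(4 * π * a * t) *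
    (exp (-(x - y) ^ 2 / (4 * a * t)) - exp (-(x + y) ^ 2 / (4 * a * t)))

noncomputable def halfLineKernelTimeDeriv (a lam t x y : ℝ) : ℝ :=
  exp (lam * t) / √(4 * π * a * t) *
    ((lam - 1 / (2 * t)) * (exp (-(x - y) ^ 2 / (4 * a * t)) - exp (-(x + y) ^ 2 / (4 * a * t)))
      + ((x - y) ^ 2 / (4 * a * t ^ 2) * exp (-(x - y) ^ 2 / (4 * a * t))
        - (x + y) ^ 2 / (4 * a * t ^ 2) * exp (-(x + y) ^ 2 / (4 * a * t))))

lemma hasDerivAt_halfLineKernel {a t : ℝ} (ha : 0 < a) (ht : 0 < t) (lam x y : ℝ) :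
    HasDerivAt (fun s => halfLineKernel a lam s x y) (halfLineKernelTimeDeriv a lam t x y) t := by
  have hP := hasDerivAt_exp_mul_div_sqrt_mul lam (4 * π * a) t (by positivity)
  have hE := (hasDerivAt_exp_neg_div_mul ((x - y) ^ 2) (4 * a) t ht.ne').sub
    (hasDerivAt_exp_neg_div_mul ((x + y) ^ 2) (4 * a) t ht.ne')
  refine (hP.mul hE).congr_deriv ?_
  simp only [halfLineKernelTimeDeriv, Pi.sub_apply]
  ring

lemma halfLineKernelTimeDeriv_pos {a lam t x y : ℝ} (ha : 0 < a) (ht : 0 < t) (hx : 0 < x)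
    (hy : 0 < y) (hlamt : 3 / 2 < lam * t) : 0 < halfLineKernelTimeDeriv a lam t x y := by
  set u := (x - y) ^ 2 / (4 * a * t)
  set v := (x + y) ^ 2 / (4 * a * t)
  have huv : u < v := div_lt_div_of_pos_right (by nlinarith) (by positivity)
  have hmono : (lam * t - 1 / 2 + v) * exp (-v) < (lam * t - 1 / 2 + u) * exp (-u) :=
    add_mul_exp_neg_strictAntiOn (lam * t - 1 / 2)
      (by rw [mem_Ici]; linarith [show 0 ≤ u by positivity])
      (by rw [mem_Ici]; linarith [show 0 ≤ v by positivity]) huv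
  have hbracket : (lam - 1 / (2 * t)) * (exp (-(x - y) ^ 2 / (4 * a * t))
        - exp (-(x + y) ^ 2 / (4 * a * t)))
      + ((x - y) ^ 2 / (4 * a * t ^ 2) * exp (-(x - y) ^ 2 / (4 * a * t))
        - (x + y) ^ 2 / (4 * a * t ^ 2) * exp (-(x + y) ^ 2 / (4 * a * t)))
      = ((lam * t - 1 / 2 + u) * exp (-u) - (lam * t - 1 / 2 + v) * exp (-v)) / t := by
    simp only [u, v, neg_div]
    field_simp
    ring
  unfold halfLineKernelTimeDeriv
  rw [hbracket]
  have := sub_pos.mpr hmono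
  positivity

lemma abs_halfLineKernelTimeDeriv_le {a lam s t : ℝ} (ha : 0 < a) (hlam : 0 ≤ lam)
    (hs : s ∈ Ioo (t / 2) (3 * t / 2)) (x y : ℝ) :
    |halfLineKernelTimeDeriv a lam s x y| ≤ exp (lam * (3 * t / 2)) / √(4 * π * a * (t / 2)) *
      (lam + 5 / t) * (exp (-(x - y) ^ 2 / (3 * (4 * a) * t))
        + exp (-(x + y) ^ 2 / (3 * (4 * a) * t))) := by
  have ht : 0 < t := by linarith [hs.1, hs.2]
  have hs0 : 0 < s := by linarith [hs.1]
  have hP : exp (lam * s) / √(4 * π * a * s)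
      ≤ exp (lam * (3 * t / 2)) / √(4 * π * a * (t / 2)) := by
    gcongr
    · exact hs.2.le
    · exact hs.1.le
  have hc : |lam - 1 / (2 * s)| ≤ lam + 1 / t := by
    have : 1 / (2 * s) ≤ 1 / t := by rw [div_le_div_iff₀ (by positivity) ht]; linarith [hs.1]
    rw [abs_le]; constructor <;> linarith [show 0 < 1 / (2 * s) by positivity]
  have hb : (0 : ℝ) < 4 * a := by positivity
  have h₁ := exp_neg_div_mul_le_of_mem_Ioo (sq_nonneg (x - y)) hb hs
  have h₂ := exp_neg_div_mul_le_of_mem_Ioo (sq_nonneg (x + y)) hb hs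
  have h₁' := div_mul_sq_mul_exp_neg_div_mul_le_of_mem_Ioo (sq_nonneg (x - y)) hb hs
  have h₂' := div_mul_sq_mul_exp_neg_div_mul_le_of_mem_Ioo (sq_nonneg (x + y)) hb hs
  set A₁ := exp (-(x - y) ^ 2 / (4 * a * s))
  set A₂ := exp (-(x + y) ^ 2 / (4 * a * s))
  have hA₁ : 0 < A₁ := exp_pos _
  have hA₂ : 0 < A₂ := exp_pos _
  have hq₁ : 0 ≤ (x - y) ^ 2 / (4 * a * s ^ 2) * A₁ := by positivity
  have hq₂ : 0 ≤ (x + y) ^ 2 / (4 * a * s ^ 2) * A₂ := by positivity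
  have hbracket : |(lam - 1 / (2 * s)) * (A₁ - A₂)
      + ((x - y) ^ 2 / (4 * a * s ^ 2) * A₁ - (x + y) ^ 2 / (4 * a * s ^ 2) * A₂)|
      ≤ (lam + 5 / t) * (exp (-(x - y) ^ 2 / (3 * (4 * a) * t))
        + exp (-(x + y) ^ 2 / (3 * (4 * a) * t))) := by
    refine (abs_add_le _ _).trans ?_
    rw [abs_mul]
    have hA : |A₁ - A₂| ≤ exp (-(x - y) ^ 2 / (3 * (4 * a) * t))
        + exp (-(x + y) ^ 2 / (3 * (4 * a) * t)) := abs_le.mpr ⟨by linarith, by linarith⟩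
    have hq : |(x - y) ^ 2 / (4 * a * s ^ 2) * A₁ - (x + y) ^ 2 / (4 * a * s ^ 2) * A₂|
        ≤ 4 / t * (exp (-(x - y) ^ 2 / (3 * (4 * a) * t))
          + exp (-(x + y) ^ 2 / (3 * (4 * a) * t))) := abs_le.mpr ⟨by linarith, by linarith⟩
    have h5 : lam + 5 / t = (lam + 1 / t) + 4 / t := by ring
    rw [h5, add_mul]
    exact add_le_add (mul_le_mul hc hA (abs_nonneg _) (by positivity)) hq
  rw [halfLineKernelTimeDeriv, abs_mul, abs_of_nonneg (by positivity)]
  exact (mul_le_mul hP hbracket (abs_nonneg _) (by positivity)).trans_eq (mul_assoc _ _ _).symm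

lemma hasDerivAt_setIntegral_halfLineKernel_mul {a lam t : ℝ} (ha : 0 < a) (hlam : 0 ≤ lam)
    (ht : 0 < t) {v : ℝ → ℝ} (hv : Measurable v) {C : ℝ} (hC : ∀ y, |v y| ≤ C) (x : ℝ)
    (S : Set ℝ) :
    IntegrableOn (fun y => halfLineKernelTimeDeriv a lam t x y * v y) S ∧
      HasDerivAt (fun s => ∫ y in S, halfLineKernel a lam s x y * v y)
        (∫ y in S, halfLineKernelTimeDeriv a lam t x y * v y) t := by
  have hvC : ∀ᵐ y ∂volume.restrict S, ‖v y‖ ≤ C := Filter.Eventually.of_forall hC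
  have hK : Integrable (fun y => halfLineKernel a lam t x y) := by
    unfold halfLineKernel
    exact ((integrable_exp_neg_sub_sq_div x (by positivity)).sub
      (integrable_exp_neg_add_sq_div x (by positivity))).const_mul _
  set D := fun y => exp (lam * (3 * t / 2)) / √(4 * π * a * (t / 2)) * (lam + 5 / t) *
    (exp (-(x - y) ^ 2 / (3 * (4 * a) * t)) + exp (-(x + y) ^ 2 / (3 * (4 * a) * t)))
  have hD : Integrable D := ((integrable_exp_neg_sub_sq_div x (by positivity)).add
      (integrable_exp_neg_add_sq_div x (by positivity))).const_mul _
  have hnhds : Ioo (t / 2) (3 * t / 2) ∈ 𝓝 t := Ioo_mem_nhds (by linarith) (by linarith)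
  refine hasDerivAt_integral_of_dominated_loc_of_deriv_le (μ := volume.restrict S)
    (F := fun s y => halfLineKernel a lam s x y * v y)
    (F' := fun s y => halfLineKernelTimeDeriv a lam s x y * v y) (bound := fun y => D y * C)
    hnhds ?_
    (hK.restrict.mul_bdd hv.aestronglyMeasurable hvC) ?_ ?_ (hD.mul_const C).restrict ?_
  · refine Filter.Eventually.of_forall fun s => ?_
    have : Continuous fun y => halfLineKernel a lam s x y := by
      unfold halfLineKernel; fun_prop
    exact (this.measurable.mul hv).aestronglyMeasurable
  · have : Continuous fun y => halfLineKernelTimeDeriv a lam t x y := by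
      unfold halfLineKernelTimeDeriv; fun_prop
    exact (this.measurable.mul hv).aestronglyMeasurable
  · refine Filter.Eventually.of_forall fun y s hs => ?_
    rw [norm_mul]
    exact mul_le_mul (abs_halfLineKernelTimeDeriv_le ha hlam hs x y) (hC y) (norm_nonneg _)
      (by positivity)
  · refine Filter.Eventually.of_forall fun y s hs => ?_
    exact (hasDerivAt_halfLineKernel ha (by linarith [hs.1]) lam x y).mul_const (v y)

theorem stmt16 (a lam : ℝ) (ha : 0 < a) (hlam : 0 < lam)
    (v0 : ℝ → ℝ) (hmeas : Measurable v0) (hbdd : ∃ C, ∀ y, |v0 y| ≤ C)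
    (hnonneg : ∀ᵐ y ∂(volume.restrict (Set.Ioi (0:ℝ))), 0 ≤ v0 y)
    (hnontriv : ¬ (v0 =ᵐ[volume.restrict (Set.Ioi (0:ℝ))] 0))
    (G : ℝ → ℝ → ℝ → ℝ)
    (hG : ∀ t x y, G t x y = Real.exp (lam * t) / Real.sqrt (4 * Real.pi * a * t) *
      (Real.exp (-(x - y) ^ 2 / (4 * a * t)) - Real.exp (-(x + y) ^ 2 / (4 * a * t))))
    (w : ℝ → ℝ → ℝ)
    (hw : ∀ t x, w t x = ∫ y in Set.Ioi (0:ℝ), G t x y * v0 y)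
    (t0 : ℝ) (ht0 : t0 = (2 * lam)⁻¹ + Real.exp 1 * (Real.exp 1 - 1)⁻¹ * lam⁻¹) :
    ∀ t x, t0 ≤ t → Real.sqrt (8 * a * t) ≤ x → 0 < deriv (fun s => w s x) t := by
  intro t x ht0t hx
  obtain ⟨C, hC⟩ := hbdd
  have hlamt0 : 3 / 2 < lam * t0 := by
    have he : 2 < exp 1 := by linarith [add_one_lt_exp one_ne_zero]
    have : 1 < exp 1 * (exp 1 - 1)⁻¹ := by rw [← div_eq_mul_inv, one_lt_div] <;> linarith
    have h : lam * t0 = 1 / 2 + exp 1 * (exp 1 - 1)⁻¹ := by rw [ht0]; field_simp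
    linarith
  have hlamt : 3 / 2 < lam * t := hlamt0.trans_le (by gcongr)
  have ht : 0 < t := pos_of_mul_pos_right (by linarith) hlam.le
  have hx0 : 0 < x := (sqrt_pos.mpr (by positivity)).trans_le hx
  have hwG : (fun s => w s x) = fun s => ∫ y in Ioi 0, halfLineKernel a lam s x y * v0 y := by
    funext s; simp only [hw, hG, halfLineKernel]
  obtain ⟨hint, hderiv⟩ :=
    hasDerivAt_setIntegral_halfLineKernel_mul ha hlam.le ht hmeas hC x (Ioi 0)
  rw [hwG, hderiv.deriv]
  refine integral_mul_pos ?_ hnonneg hnontriv hint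
  filter_upwards [ae_restrict_mem measurableSet_Ioi] with y hy
    using halfLineKernelTimeDeriv_pos ha ht hx0 hy hlamt
end
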